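/- For every integer k ≥ 2, Δ_k(1/√(8+8k)) < 0. -/

import Mathlib

/-- `C_k = (2k-2)!/(k-1)!` as a real number. -/
noncomputable def Cc (k : ℕ) : ℝ :=
  ((2 * k - 2).factorial : ℝ) / ((k - 1).factorial : ℝ)

/-- `p_k(z) = 1 − 2z − (7+8k)z²`. -/
noncomputable def Pp (k : ℕ) (z : ℝ) : ℝ := 1 - 2 * z - (7 + 8 * k) * z ^ 2

/-- `h_k(z) = 1 − z − C_k·z^{2k+1}`. -/
noncomputable def Hh (k : ℕ) (z : ℝ) : ℝ := 1 - z - Cc k * z ^ (2 * k + 1)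

/-- `Δ_k(z) = p_k(z) + 4·C_k·z^{2k+1}·h_k(z)`. -/
noncomputable def Dd (k : ℕ) (z : ℝ) : ℝ :=
  Pp k z + 4 * Cc k * z ^ (2 * k + 1) * Hh k z

/-! At `z = 1/√(8+8k)` one has `(8+8k) z² = 1`, so `p_k(z) = z² − 2z`. With `t = C_k z^{2k+1} > 0`,
`Δ_k(z) = p_k(z) + 4t(1 − z − t) < p_k(z) + 4t`, and `4t ≤ z` because `4 C_k ≤ (8+8k)^k`, which
follows from `(2m)! ≤ m! (2m)^m`. Hence `Δ_k(z) < z² − z < 0`, as `z < 1`. -/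

open Nat in
theorem factorial_two_mul_le (m : ℕ) : (2 * m)! ≤ m ! * (2 * m) ^ m := by
  have h := factorial_mul_descFactorial (show m ≤ 2 * m by omega)
  rw [show 2 * m - m = m by omega] at h
  rw [← h]
  exact Nat.mul_le_mul_left _ (descFactorial_le_pow _ _)

theorem Cc_pos (k : ℕ) : 0 < Cc k := by
  unfold Cc
  positivity

theorem four_mul_Cc_le_pow (k : ℕ) (hk : 1 ≤ k) : 4 * Cc k ≤ (8 + 8 * k : ℝ) ^ k := by
  obtain ⟨m, rfl⟩ : ∃ m, k = m + 1 := ⟨k - 1, by omega⟩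
  have hnat : 4 * (2 * m).factorial ≤ m.factorial * (16 + 8 * m) ^ (m + 1) :=
    calc 4 * (2 * m).factorial ≤ 4 * (m.factorial * (2 * m) ^ m) :=
          Nat.mul_le_mul_left _ (factorial_two_mul_le m)
      _ = m.factorial * ((2 * m) ^ m * 4) := by ring
      _ ≤ m.factorial * ((16 + 8 * m) ^ m * (16 + 8 * m)) :=
          Nat.mul_le_mul_left _ (Nat.mul_le_mul (Nat.pow_le_pow_left (by omega) _) (by omega))
      _ = m.factorial * (16 + 8 * m) ^ (m + 1) := by rw [pow_succ]
  rw [Cc, show 2 * (m + 1) - 2 = 2 * m by omega, Nat.add_sub_cancel, mul_div_assoc',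
    div_le_iff₀ (by positivity)]
  push_cast
  convert (Nat.cast_le (α := ℝ)).mpr hnat using 1 <;> push_cast <;> ring

theorem Pp_eq_of_sq_mul_eq_one (k : ℕ) {z : ℝ} (hz : z ^ 2 * (8 + 8 * k) = 1) :
    Pp k z = z ^ 2 - 2 * z := by
  rw [Pp]
  linear_combination -hz

theorem Dd_lt_Pp_add (k : ℕ) {z : ℝ} (hz : 0 < z) (hC : 4 * Cc k * z ^ (2 * k) ≤ 1) :
    Dd k z < Pp k z + z := by
  have ht : 0 < Cc k * z ^ (2 * k + 1) := mul_pos (Cc_pos k) (pow_pos hz _)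
  have h4t : 4 * (Cc k * z ^ (2 * k + 1)) ≤ z := by
    rw [pow_succ]
    nlinarith
  rw [Dd, Hh]
  nlinarith

/-- For every integer `k ≥ 2`, `Δ_k(1/√(8+8k)) < 0`. -/
theorem statement5 (k : ℕ) (hk : 2 ≤ k) :
    Dd k (1 / Real.sqrt (8 + 8 * k)) < 0 := by
  set N : ℝ := 8 + 8 * k
  have hN : 1 < N := by
    have : (2 : ℝ) ≤ k := by exact_mod_cast hk
    linarith
  set z := 1 / Real.sqrt N
  have hz : 0 < z := by positivity
  have hz1 : z < 1 := by
    rw [div_lt_one (by positivity), Real.lt_sqrt zero_le_one]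
    linarith
  have hzN : z ^ 2 * N = 1 := by
    rw [div_pow, Real.sq_sqrt (by positivity)]
    field_simp
  have hC : 4 * Cc k * z ^ (2 * k) ≤ 1 := by
    rw [pow_mul, eq_inv_of_mul_eq_one_left hzN, inv_pow, ← div_eq_mul_inv,
      div_le_one (by positivity)]
    exact four_mul_Cc_le_pow k (by omega)
  have := Dd_lt_Pp_add k hz hC
  rw [Pp_eq_of_sq_mul_eq_one k hzN] at this
  nlinarith
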